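/- Let f = (f_n(k)) (n ≥ 1, 1 ≤ k ≤ 2n−1) be a family of rational numbers satisfying the finite difference system (1.2) together with the initial conditions [sec1]. Then for every n ≥ 1, the row sum equals the secant number: Σ_{k=1}^{2n−1} f_n(k) = E_{2n}. -/

import Mathlib

open scoped BigOperators

/-- `σ` is an alternating (down-up) permutation of `{1,…,n}` (written 0-indexed):
`σ(1) > σ(2) < σ(3) > σ(4) < ⋯` in the 1-indexed notation of the paper. -/
def IsAlternating {n : ℕ} (σ : Equiv.Perm (Fin n)) : Prop :=
  ∀ i : ℕ, ∀ h : i + 1 < n,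
    if i % 2 = 0 then (σ ⟨i + 1, h⟩ : ℕ) < (σ ⟨i, by omega⟩ : ℕ)
    else (σ ⟨i, by omega⟩ : ℕ) < (σ ⟨i + 1, h⟩ : ℕ)

/-- The value (in `{1,…,n}`) of the permutation `σ` at the 1-based position `j`,
with the convention that positions outside `{1,…,n}` carry the value `0`. -/
def posVal {n : ℕ} (σ : Equiv.Perm (Fin n)) (j : ℕ) : ℕ :=
  if h : 1 ≤ j ∧ j ≤ n then (σ ⟨j - 1, by omega⟩ : ℕ) + 1 else 0

/-- `grn σ`: the greater neighbor of the maximum value `n` in `σ`. -/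
def grn : {n : ℕ} → Equiv.Perm (Fin n) → ℕ
  | 0, _ => 0
  | (m + 1), σ =>
      max (posVal σ (((σ.symm (Fin.last m) : ℕ) + 1) - 1))
          (posVal σ (((σ.symm (Fin.last m) : ℕ) + 1) + 1))

/-- The set `𝔄_n` of alternating permutations of length `n`. -/
def altA (n : ℕ) : Set (Equiv.Perm (Fin n)) := {σ | IsAlternating σ}

/-- The set `𝔄_{n,k} = {σ ∈ 𝔄_n : grn σ = k}`. -/
def altAk (n k : ℕ) : Set (Equiv.Perm (Fin n)) := {σ | IsAlternating σ ∧ grn σ = k}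

/-- The tangent numbers, defined by `tan u = Σ_{n≥0} T_{2n+1} u^{2n+1}/(2n+1)!`;
`tangentNumber m` is the `m`-th Taylor coefficient of `tan` at `0`, times `m!`. -/
noncomputable def tangentNumber (m : ℕ) : ℝ := iteratedDeriv m Real.tan 0

/-- The secant numbers, defined by `sec u = 1/cos u = Σ_{n≥0} E_{2n} u^{2n}/(2n)!`;
`secantNumber m` is the `m`-th Taylor coefficient of `sec` at `0`, times `m!`. -/
noncomputable def secantNumber (m : ℕ) : ℝ := iteratedDeriv m (fun u => 1 / Real.cos u) 0

/-- The finite difference system (1.2):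
`f_n(k+2) − 2 f_n(k+1) + f_n(k) + 4 f_{n−1}(k) = 0` for `n ≥ 2`, `1 ≤ k ≤ 2n−3`. -/
def SatisfiesFD (f : ℕ → ℕ → ℚ) : Prop :=
  ∀ n, 2 ≤ n → ∀ k, 1 ≤ k → k ≤ 2 * n - 3 →
    f n (k + 2) - 2 * f n (k + 1) + f n k + 4 * f (n - 1) k = 0

/-- Initial conditions [tan1]. -/
def Tan1 (f : ℕ → ℕ → ℚ) : Prop :=
  f 1 1 = 1 ∧ ∀ n, 2 ≤ n →
    f n 1 = 0 ∧ f n 2 = 2 * ∑ k ∈ Finset.Icc 1 (2 * n - 3), f (n - 1) k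

/-- Initial conditions [sec1]. -/
def Sec1 (f : ℕ → ℕ → ℚ) : Prop :=
  f 1 1 = 1 ∧ ∀ n, 2 ≤ n →
    f n 1 = ∑ k ∈ Finset.Icc 1 (2 * n - 3), f (n - 1) k ∧
    f n 2 = 3 * ∑ k ∈ Finset.Icc 1 (2 * n - 3), f (n - 1) k

/-!
Weight row `n` by `C(2n-1-k, q)`. Summing the difference equation against these weights and
moving both differences onto the binomial (whose second difference lowers `q` by two) gives a
recurrence in `n` for the weighted sums, with boundary terms fixed by `f_n(1)` and
`f_n(2) = 3 f_n(1)`; Pascal's rule unrolls it to a closed form. At `q = 0`, since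
`f_{j+1}(1)` is the `j`-th row sum `S_j` by [sec1] (and `S_0 := f_1(1) = 1`),
`S_{m+1} = ∑_{d ≤ m} (-4)^d S_{m-d} (C(2m+2, 2d+2) + C(2m+1, 2d+2))`.
The secant numbers obey the same recurrence: differentiate `cos 2u · sec u = 2 cos u - sec u`
(`2m+2` times) and `cos 2u · sec' u = 2 sin u - sec' u` (`2m+1` times) at `0` by Leibniz' rule;
the derivatives of `cos 2u` at `0` are `(-4)^d` in order `2d` and vanish in odd order.
-/

open Finset Real Topology

theorem Finset.sum_range_two_mul {M : Type*} [AddCommMonoid M] (g : ℕ → M) (K : ℕ) :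
    ∑ i ∈ range (2 * K), g i = ∑ d ∈ range K, (g (2 * d) + g (2 * d + 1)) := by
  induction K with
  | zero => simp
  | succ K ih =>
    rw [mul_add, mul_one, sum_range_succ, sum_range_succ, ih, sum_range_succ, add_assoc]

theorem Finset.sum_range_second_diff_mul {R : Type*} [CommRing R] (g ψ : ℕ → R) (N : ℕ)
    (hψ₀ : ψ 0 = 0) (hψ₁ : ψ 1 = 0) :
    ∑ k ∈ range N, (g (k + 2) - 2 * g (k + 1) + g k) * ψ (N + 1 - k)
      = ∑ j ∈ range (N + 2), g j * (ψ (N + 3 - j) - 2 * ψ (N + 2 - j) + ψ (N + 1 - j))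
        - g 0 * ψ (N + 3) - (g 1 - 2 * g 0) * ψ (N + 2) := by
  have h₃ : ∑ j ∈ range (N + 2), g j * ψ (N + 3 - j)
      = ∑ k ∈ range N, g (k + 2) * ψ (N + 1 - k) + g 1 * ψ (N + 2) + g 0 * ψ (N + 3) := by
    rw [sum_range_succ', sum_range_succ']
    congr 2
    exact sum_congr rfl fun k _ => by rw [show N + 3 - (k + 1 + 1) = N + 1 - k by omega]
  have h₂ : ∑ j ∈ range (N + 2), g j * ψ (N + 2 - j)
      = ∑ k ∈ range N, g (k + 1) * ψ (N + 1 - k) + g 0 * ψ (N + 2) := by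
    rw [sum_range_succ, sum_range_succ', show N + 2 - (N + 1) = 1 by omega, hψ₁, mul_zero,
      add_zero]
    congr 1
    exact sum_congr rfl fun k _ => by rw [show N + 2 - (k + 1) = N + 1 - k by omega]
  have h₁ : ∑ j ∈ range (N + 2), g j * ψ (N + 1 - j) = ∑ k ∈ range N, g k * ψ (N + 1 - k) := by
    rw [sum_range_succ, sum_range_succ, show N + 1 - (N + 1) = 0 by omega,
      show N + 1 - N = 1 by omega, hψ₀, hψ₁]
    ring
  simp only [mul_add, mul_sub, add_mul, sub_mul, sum_add_distrib, sum_sub_distrib, mul_assoc,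
    mul_left_comm _ (2 : R), ← mul_sum]
  linear_combination 2 * h₂ - h₃ - h₁

theorem Nat.choose_add_two_add_two (m r : ℕ) :
    (m + 2).choose (r + 2) = m.choose r + 2 * m.choose (r + 1) + m.choose (r + 2) := by
  simp only [Nat.choose_succ_succ]
  ring

theorem cast_choose_second_diff {R : Type*} [CommRing R] (i q : ℕ) :
    ((i + 2).choose (q + 2) : R) - 2 * (i + 1).choose (q + 2) + i.choose (q + 2) = i.choose q := by
  rw [Nat.choose_add_two_add_two, Nat.choose_succ_succ i (q + 1)]
  push_cast
  ring

/-- The moment `∑_{k=1}^{2n-1} f_n(k) C(2n-1-k, q)` of row `n`, summed over `j = k - 1`. -/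
def rowMoment (f : ℕ → ℕ → ℚ) (n q : ℕ) : ℚ :=
  ∑ j ∈ range (2 * n - 1), f n (j + 1) * (2 * n - 2 - j).choose q

theorem sum_Icc_eq_rowMoment_zero (f : ℕ → ℕ → ℚ) (n : ℕ) :
    ∑ k ∈ Icc 1 (2 * n - 1), f n k = rowMoment f n 0 := by
  rw [rowMoment, ← Ico_add_one_right_eq_Icc, sum_Ico_eq_sum_range]
  simp [add_comm]

section

variable {f : ℕ → ℕ → ℚ}

theorem rowMoment_succ_succ (hFD : SatisfiesFD f) (h₂ : ∀ n, 2 ≤ n → f n 2 = 3 * f n 1)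
    (m q : ℕ) :
    rowMoment f (m + 2) q
      = f (m + 2) 1 * ((2 * m + 4).choose (q + 2) + (2 * m + 3).choose (q + 2) : ℕ)
        - 4 * (rowMoment f (m + 1) q + 2 * rowMoment f (m + 1) (q + 1)
          + rowMoment f (m + 1) (q + 2)) := by
  have hparts := sum_range_second_diff_mul (fun j => f (m + 2) (j + 1))
    (fun i => (i.choose (q + 2) : ℚ)) (2 * m + 1) (by simp)
    (by simp [Nat.choose_eq_zero_of_lt (by omega : 1 < q + 2)])
  have hlhs : ∀ k ∈ range (2 * m + 1),
      (f (m + 2) (k + 2 + 1) - 2 * f (m + 2) (k + 1 + 1) + f (m + 2) (k + 1))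
        * ((2 * m + 1 + 1 - k).choose (q + 2) : ℚ)
      = -4 * (f (m + 1) (k + 1) * (2 * m - k).choose q
        + 2 * (f (m + 1) (k + 1) * (2 * m - k).choose (q + 1))
        + f (m + 1) (k + 1) * (2 * m - k).choose (q + 2)) := by
    intro k hk
    have hk' : k + 1 ≤ 2 * (m + 2) - 3 := by simp at hk; omega
    have := hFD (m + 2) (by omega) (k + 1) (by omega) hk'
    rw [show 2 * m + 1 + 1 - k = 2 * m - k + 2 by simp at hk; omega, Nat.choose_add_two_add_two]
    rw [show m + 2 - 1 = m + 1 by omega] at this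
    push_cast
    linear_combination ((2 * m - k).choose q + 2 * (2 * m - k).choose (q + 1)
      + (2 * m - k).choose (q + 2) : ℚ) * this
  have hrhs : ∀ j ∈ range (2 * m + 1 + 2),
      f (m + 2) (j + 1) * (((2 * m + 1 + 3 - j).choose (q + 2) : ℚ)
        - 2 * (2 * m + 1 + 2 - j).choose (q + 2) + (2 * m + 1 + 1 - j).choose (q + 2))
      = f (m + 2) (j + 1) * (2 * (m + 2) - 2 - j).choose q := by
    intro j hj
    have hj' : j ≤ 2 * m + 2 := by simp at hj; omega
    rw [show 2 * m + 1 + 3 - j = 2 * (m + 2) - 2 - j + 2 by omega,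
      show 2 * m + 1 + 2 - j = 2 * (m + 2) - 2 - j + 1 by omega,
      show 2 * m + 1 + 1 - j = 2 * (m + 2) - 2 - j by omega, cast_choose_second_diff]
  rw [sum_congr rfl hlhs, sum_congr rfl hrhs, h₂ (m + 2) (by omega)] at hparts
  simp only [rowMoment, show 2 * (m + 2) - 1 = 2 * m + 1 + 2 by omega,
    show 2 * (m + 1) - 1 = 2 * m + 1 by omega, show 2 * (m + 1) - 2 = 2 * m by omega]
  rw [← mul_sum, sum_add_distrib, sum_add_distrib, ← mul_sum] at hparts
  push_cast
  linear_combination -hparts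

theorem rowMoment_succ (hFD : SatisfiesFD f) (h₂ : ∀ n, 2 ≤ n → f n 2 = 3 * f n 1) (n q : ℕ) :
    rowMoment f (n + 1) q
      = f (n + 1) 1 * ((2 * n + 2).choose (q + 2) + (2 * n + 1).choose (q + 2) : ℕ)
        - 4 * (rowMoment f n q + 2 * rowMoment f n (q + 1) + rowMoment f n (q + 2)) := by
  rcases n with _ | m
  · rcases q with _ | q
    · simp [rowMoment]
    · simp [rowMoment, Nat.choose_eq_zero_of_lt (by omega : 2 < q + 1 + 2),
        Nat.choose_eq_zero_of_lt (by omega : 1 < q + 1 + 2)]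
  · exact rowMoment_succ_succ hFD h₂ m q

theorem rowMoment_eq_sum (hFD : SatisfiesFD f) (h₂ : ∀ n, 2 ≤ n → f n 2 = 3 * f n 1) (n q : ℕ) :
    rowMoment f n q = ∑ d ∈ range n, (-4) ^ d * f (n - d) 1
      * ((2 * n).choose (q + 2 * d + 2) + (2 * n - 1).choose (q + 2 * d + 2) : ℕ) := by
  induction n generalizing q with
  | zero => simp [rowMoment]
  | succ n ih =>
    have hterm : ∀ d ∈ range n,
        -4 * ((-4) ^ d * f (n - d) 1
            * ((2 * n).choose (q + 2 * d + 2) + (2 * n - 1).choose (q + 2 * d + 2) : ℕ)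
          + 2 * ((-4) ^ d * f (n - d) 1
            * ((2 * n).choose (q + 1 + 2 * d + 2) + (2 * n - 1).choose (q + 1 + 2 * d + 2) : ℕ))
          + (-4) ^ d * f (n - d) 1
            * ((2 * n).choose (q + 2 + 2 * d + 2) + (2 * n - 1).choose (q + 2 + 2 * d + 2) : ℕ))
        = (-4) ^ (d + 1) * f (n + 1 - (d + 1)) 1 * ((2 * (n + 1)).choose (q + 2 * (d + 1) + 2)
            + (2 * (n + 1) - 1).choose (q + 2 * (d + 1) + 2) : ℕ) := by
      intro d hd
      have hn : 1 ≤ n := by simp at hd; omega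
      rw [show 2 * (n + 1) = 2 * n + 2 by ring, show 2 * n + 2 - 1 = 2 * n - 1 + 2 by omega,
        show q + 2 * (d + 1) + 2 = q + 2 * d + 2 + 2 by ring, Nat.choose_add_two_add_two,
        Nat.choose_add_two_add_two, show q + 1 + 2 * d + 2 = q + 2 * d + 2 + 1 by ring,
        show q + 2 + 2 * d + 2 = q + 2 * d + 2 + 2 by ring, Nat.add_sub_add_right]
      push_cast
      ring
    rw [rowMoment_succ hFD h₂, ih, ih, ih, sum_range_succ', ← sum_congr rfl hterm, ← mul_sum,
      sum_add_distrib, sum_add_distrib, ← mul_sum]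
    simp only [pow_zero, one_mul, Nat.sub_zero, mul_zero, add_zero]
    rw [show 2 * (n + 1) = 2 * n + 2 by ring, show 2 * n + 2 - 1 = 2 * n + 1 by omega]
    ring

end

theorem iteratedDeriv_cos_two_mul_even (d : ℕ) :
    iteratedDeriv (2 * d) (fun u => cos (2 * u)) 0 = (-4) ^ d := by
  rw [iteratedDeriv_comp_const_mul contDiff_cos, iteratedDeriv_even_cos]
  simp [pow_mul, ← mul_pow]
  norm_num

theorem iteratedDeriv_cos_two_mul_odd (d : ℕ) :
    iteratedDeriv (2 * d + 1) (fun u => cos (2 * u)) 0 = 0 := by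
  rw [iteratedDeriv_comp_const_mul contDiff_cos, iteratedDeriv_odd_cos]
  simp

theorem iteratedDeriv_cos_two_mul_mul {F : ℝ → ℝ} {n K : ℕ} (hF : ContDiffAt ℝ n F 0)
    (hK : n < 2 * K) :
    iteratedDeriv n (fun u => cos (2 * u) * F u) 0
      = ∑ d ∈ range K, (n.choose (2 * d) : ℝ) * (-4) ^ d * iteratedDeriv (n - 2 * d) F 0 := by
  set g := fun i => (n.choose i : ℝ) * iteratedDeriv i (fun u => cos (2 * u)) 0
    * iteratedDeriv (n - i) F 0
  calc iteratedDeriv n (fun u => cos (2 * u) * F u) 0 = ∑ i ∈ range (n + 1), g i :=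
        iteratedDeriv_fun_mul (by fun_prop) hF
    _ = ∑ i ∈ range (2 * K), g i := by
        refine sum_subset (range_subset_range.2 (by omega)) fun i _ hi => ?_
        simp [g, Nat.choose_eq_zero_of_lt (by simpa using hi : n < i)]
    _ = _ := by
        rw [sum_range_two_mul]
        simp [g, iteratedDeriv_cos_two_mul_even, iteratedDeriv_cos_two_mul_odd]

theorem contDiffAt_one_div_cos {n : WithTop ℕ∞} : ContDiffAt ℝ n (fun u => 1 / cos u) 0 :=
  contDiffAt_const.div contDiff_cos.contDiffAt (by simp)

theorem cos_two_mul_mul_one_div_cos (u : ℝ) :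
    cos (2 * u) * (1 / cos u) = 2 * cos u - 1 / cos u := by
  by_cases h : cos u = 0
  · simp [h]
  · field_simp
    rw [cos_two_mul]

theorem cos_two_mul_mul_deriv_one_div_cos :
    (fun u => cos (2 * u) * deriv (fun u => 1 / cos u) u)
      =ᶠ[𝓝 0] fun u => 2 * sin u - deriv (fun u => 1 / cos u) u := by
  filter_upwards [continuous_cos.continuousAt.eventually_ne (by simp : cos 0 ≠ 0)] with u hu
  have hd : deriv (fun u => 1 / cos u) u = sin u / cos u ^ 2 := by
    rw [((hasDerivAt_const u (1 : ℝ)).fun_div (hasDerivAt_cos u) hu).deriv]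
    ring
  rw [hd, cos_two_mul]
  field_simp

theorem secantNumber_zero : secantNumber 0 = 1 := by simp [secantNumber]

theorem sum_choose_even_secantNumber (N : ℕ) :
    ∑ d ∈ range (N + 1), ((2 * N).choose (2 * d) : ℝ) * (-4) ^ d * secantNumber (2 * N - 2 * d)
      = 2 * (-1) ^ N - secantNumber (2 * N) := by
  have h := iteratedDeriv_cos_two_mul_mul (F := fun u => 1 / cos u) (n := 2 * N) (K := N + 1)
    contDiffAt_one_div_cos (by omega)
  simp_rw [cos_two_mul_mul_one_div_cos] at h
  rw [iteratedDeriv_fun_sub (by fun_prop) contDiffAt_one_div_cos] at h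
  simpa [secantNumber] using h.symm

theorem sum_choose_odd_secantNumber (m : ℕ) :
    ∑ d ∈ range (m + 2),
        ((2 * m + 1).choose (2 * d) : ℝ) * (-4) ^ d * secantNumber (2 * m + 1 - 2 * d + 1)
      = 2 * (-1) ^ m - secantNumber (2 * m + 2) := by
  have h := iteratedDeriv_cos_two_mul_mul (F := deriv fun u => 1 / cos u) (n := 2 * m + 1)
    (K := m + 2) (contDiffAt_one_div_cos.derivWithin le_rfl) (by omega)
  rw [cos_two_mul_mul_deriv_one_div_cos.iteratedDeriv_eq,
    iteratedDeriv_fun_sub (by fun_prop) (contDiffAt_one_div_cos.derivWithin le_rfl)] at h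
  simpa [secantNumber, iteratedDeriv_succ'] using h.symm

theorem secantNumber_two_mul_succ (m : ℕ) :
    secantNumber (2 * (m + 1)) = ∑ d ∈ range (m + 1), (-4) ^ d * secantNumber (2 * (m - d))
      * ((2 * m + 2).choose (2 * d + 2) + (2 * m + 1).choose (2 * d + 2) : ℕ) := by
  have h1 := sum_choose_even_secantNumber (m + 1)
  have h2 := sum_choose_odd_secantNumber m
  rw [sum_range_succ'] at h1 h2
  have hterm : ∀ d ∈ range (m + 1),
      ((2 * (m + 1)).choose (2 * (d + 1)) : ℝ) * (-4) ^ (d + 1)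
          * secantNumber (2 * (m + 1) - 2 * (d + 1))
        + ((2 * m + 1).choose (2 * (d + 1)) : ℝ) * (-4) ^ (d + 1)
          * secantNumber (2 * m + 1 - 2 * (d + 1) + 1)
      = -4 * ((-4) ^ d * secantNumber (2 * (m - d))
          * ((2 * m + 2).choose (2 * d + 2) + (2 * m + 1).choose (2 * d + 2) : ℕ)) := by
    intro d hd
    rw [show 2 * (m + 1) = 2 * m + 2 by ring, show 2 * (d + 1) = 2 * d + 2 by ring]
    rcases (by simp at hd; omega : d < m ∨ d = m) with h | rfl
    · rw [show 2 * m + 2 - (2 * d + 2) = 2 * (m - d) by omega,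
        show 2 * m + 1 - (2 * d + 2) + 1 = 2 * (m - d) by omega]
      push_cast
      ring
    · rw [Nat.choose_eq_zero_of_lt (by omega : 2 * d + 1 < 2 * d + 2), Nat.sub_self, Nat.sub_self]
      push_cast
      ring
  have hsum := sum_congr rfl hterm
  rw [sum_add_distrib, ← mul_sum] at hsum
  simp only [mul_zero, Nat.choose_zero_right, Nat.cast_one, pow_zero, mul_one, Nat.sub_zero]
    at h1 h2
  rw [pow_succ] at h1
  linear_combination (1/4 : ℝ) * (h1 + h2 - hsum)

section

variable {f : ℕ → ℕ → ℚ}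

theorem Sec1.apply_two (hInit : Sec1 f) (n : ℕ) (hn : 2 ≤ n) : f n 2 = 3 * f n 1 := by
  rw [(hInit.2 n hn).2, (hInit.2 n hn).1]

theorem Sec1.sum_Icc_eq_apply_succ_one (hInit : Sec1 f) (n : ℕ) (hn : 1 ≤ n) :
    ∑ k ∈ Icc 1 (2 * n - 1), f n k = f (n + 1) 1 := by
  rw [(hInit.2 (n + 1) (by omega)).1, show 2 * (n + 1) - 3 = 2 * n - 1 by omega,
    Nat.add_sub_cancel]

theorem Sec1.cast_apply_succ_one (hInit : Sec1 f) (hFD : SatisfiesFD f) (m : ℕ) :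
    (f (m + 1) 1 : ℝ) = secantNumber (2 * m) := by
  induction m using Nat.strong_induction_on with
  | _ m ih =>
    rcases m with _ | m
    · simp [hInit.1, secantNumber_zero]
    rw [← hInit.sum_Icc_eq_apply_succ_one (m + 1) (by omega), sum_Icc_eq_rowMoment_zero,
      rowMoment_eq_sum hFD hInit.apply_two, secantNumber_two_mul_succ]
    push_cast
    refine sum_congr rfl fun d hd => ?_
    have hd : d < m + 1 := by simpa using hd
    rw [show m + 1 - d = m - d + 1 by omega, ih (m - d) (by omega),
      show 2 * (m + 1) = 2 * m + 2 by ring, show 2 * m + 2 - 1 = 2 * m + 1 by omega, zero_add]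

end

/-- any solution of the finite difference system (1.2) with initial
conditions [sec1] has row sums equal to the secant numbers. -/
theorem stmt1 (f : ℕ → ℕ → ℚ) (hFD : SatisfiesFD f) (hInit : Sec1 f) :
    ∀ n, 1 ≤ n →
      ((∑ k ∈ Finset.Icc 1 (2 * n - 1), f n k : ℚ) : ℝ) = secantNumber (2 * n) := by
  intro n hn
  obtain ⟨m, rfl⟩ : ∃ m, n = m + 1 := ⟨n - 1, by omega⟩
  rw [hInit.sum_Icc_eq_apply_succ_one (m + 1) hn, hInit.cast_apply_succ_one hFD]
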